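/- Let E_X, E_Z > 0, let 0 < ε < 1, suppose E_X/E_Z ≥ 1/ε, and let L₁, L₂ be integers with L₁ ≥ -log₂(ε) - log₂(E_Z) and L₂ ≥ -log₂(ε) + log₂(E_X). With p_l = 1/(1 + e^{2^l/E_X}) and p̃_l = 1/(1 + e^{2^l/E_Z}), the following inequality holds: Σ_{l=-L₁}^{L₂} [H(p_l ⊗ p̃_l) - H(p̃_l)] ≥ log₂(1 + E_X/E_Z) - 5·log₂(e)·ε. -/

import Mathlib

/-- The binary entropy function (base 2): `H(p) = -p log₂ p - (1-p) log₂ (1-p)`. -/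
noncomputable def binEnt (p : ℝ) : ℝ :=
  -(p * Real.logb 2 p) - (1 - p) * Real.logb 2 (1 - p)

/-- The binary convolution `p ⊗ q = p(1-q) + q(1-p)`. -/
def binConv (p q : ℝ) : ℝ := p * (1 - q) + q * (1 - p)

/-!
Put `ψ x = log (sinh x) - x coth x` (`entropyPotential`). The entropy in nats of the Bernoulli
parameter `1 / (1 + eˣ)` is `ψ x - ψ (x / 2)`, so along the dyadic levels `x = 2ˡ / E` the sum
of the entropies `H(p_l)` telescopes to `ψ` at the two ends. Since `p_l ≤ p_l ⊗ p̃_l ≤ 1/2` and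
`H` increases on `[0, 1/2]`, the sum in the theorem is at least `∑ (H(p_l) - H(p̃_l))`, a
difference of four values of `ψ`. At the top level `ψ x` is within `1 / x ≤ ε` of its limit
`-log 2`; at the bottom level it is within `x² ≤ ε² / 4` of `log x - 1`, leaving
`log (E_X / E_Z) ≥ log (1 + E_X / E_Z) - E_Z / E_X`.
-/

open Real Finset

theorem Int.sum_Icc_sub_sub_one {M : Type*} [AddCommGroup M] (f : ℤ → M) {a b : ℤ}
    (hab : a - 1 ≤ b) : ∑ l ∈ Icc a b, (f l - f (l - 1)) = f b - f (a - 1) := by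
  induction b, hab using Int.leInduction with
  | base => simp
  | succ b hb ih =>
    rw [← insert_Icc_right_eq_Icc_add_one (by omega), sum_insert (by simp), ih,
      add_sub_cancel_right]
    abel

theorem sinh_le_mul_cosh {x : ℝ} (hx : 0 ≤ x) : sinh x ≤ x * cosh x := by
  refine hasSum_le (fun n ↦ ?_) (hasSum_sinh x) ((hasSum_cosh x).mul_left x)
  rw [pow_succ', Nat.factorial_succ, mul_div_assoc]
  gcongr
  nlinarith

theorem cosh_sub_one_le_sq {x : ℝ} (hx : |x| ≤ 1) : cosh x - 1 ≤ x ^ 2 := by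
  have h₁ := (abs_le.1 (abs_exp_sub_one_sub_id_le hx)).2
  have h₂ := (abs_le.1 (abs_exp_sub_one_sub_id_le (x := -x) (by rwa [abs_neg]))).2
  rw [cosh_eq]
  nlinarith

noncomputable def entropyPotential (x : ℝ) : ℝ := log (sinh x) - x * cosh x / sinh x

theorem binEntropy_one_div_one_add_exp {x : ℝ} (hx : x ≠ 0) :
    binEntropy (1 / (1 + exp x)) = entropyPotential x - entropyPotential (x / 2) := by
  obtain ⟨t, rfl⟩ : ∃ t, x = 2 * t := ⟨x / 2, by ring⟩
  have hs : sinh t ≠ 0 := by simpa using hx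
  have hc : 0 < cosh t := cosh_pos t
  have hexp : exp (2 * t) = exp t / exp (-t) := by rw [← exp_sub]; ring_nf
  have hp : 1 / (1 + exp (2 * t)) = exp (-t) / (2 * cosh t) := by
    rw [hexp, cosh_eq]; field_simp; ring
  have hq : 1 - 1 / (1 + exp (2 * t)) = exp t / (2 * cosh t) := by
    rw [hexp, cosh_eq]; field_simp; ring
  have hlog_sinh : log (sinh (2 * t)) = log 2 + log (sinh t) + log (cosh t) := by
    rw [sinh_two_mul, log_mul (by positivity) hc.ne', log_mul two_ne_zero hs]
  rw [binEntropy, hq, hp, log_inv, log_inv, log_div (exp_pos _).ne' (by positivity),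
    log_div (exp_pos _).ne' (by positivity), log_exp, log_exp, log_mul two_ne_zero hc.ne',
    entropyPotential, entropyPotential, mul_div_cancel_left₀ t two_ne_zero, hlog_sinh,
    cosh_two_mul, sinh_two_mul, ← cosh_sub_sinh, ← cosh_add_sinh]
  field_simp
  ring

theorem sum_binEntropy_one_div_one_add_exp_two_zpow_div {E : ℝ} (hE : 0 < E) {a b : ℤ}
    (hab : a - 1 ≤ b) :
    ∑ l ∈ Icc a b, binEntropy (1 / (1 + exp (2 ^ l / E))) =
      entropyPotential (2 ^ b / E) - entropyPotential (2 ^ (a - 1) / E) := by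
  have hhalf (l : ℤ) : (2 : ℝ) ^ l / E / 2 = 2 ^ (l - 1) / E := by
    rw [zpow_sub_one₀ two_ne_zero]; ring
  rw [← Int.sum_Icc_sub_sub_one (fun l ↦ entropyPotential (2 ^ l / E)) hab]
  refine sum_congr rfl fun l _ ↦ ?_
  rw [binEntropy_one_div_one_add_exp (by positivity), hhalf]

theorem abs_entropyPotential_sub_log_add_one_le {x : ℝ} (hx : 0 < x) :
    |entropyPotential x - (log x - 1)| ≤ cosh x - 1 := by
  have hsinh : x ≤ sinh x := self_le_sinh_iff.2 hx.le
  have hs : 0 < sinh x := hx.trans_le hsinh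
  have hcoth_ge : 1 ≤ x * cosh x / sinh x := (one_le_div hs).2 (sinh_le_mul_cosh hx.le)
  have hcoth_le : x * cosh x / sinh x ≤ cosh x :=
    div_le_of_le_mul₀ hs.le (cosh_pos x).le (by nlinarith [cosh_pos x])
  have hlog_ge : 0 ≤ log (sinh x / x) := log_nonneg ((one_le_div hx).2 hsinh)
  have hlog_le : log (sinh x / x) ≤ cosh x - 1 := by
    refine (log_le_sub_one_of_pos (by positivity)).trans (sub_le_sub_right ?_ 1)
    exact div_le_of_le_mul₀ hx.le (cosh_pos x).le (by simpa [mul_comm] using sinh_le_mul_cosh hx.le)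
  rw [log_div hs.ne' hx.ne'] at hlog_ge hlog_le
  rw [entropyPotential, abs_le]
  constructor <;> linarith

theorem log_div_sub_le_entropyPotential_sub {u v : ℝ} (hu : 0 < u) (hv : 0 < v) (hu1 : u ≤ 1)
    (hv1 : v ≤ 1) : log (v / u) - u ^ 2 - v ^ 2 ≤ entropyPotential v - entropyPotential u := by
  have hψu := (abs_le.1 (abs_entropyPotential_sub_log_add_one_le hu)).2
  have hψv := (abs_le.1 (abs_entropyPotential_sub_log_add_one_le hv)).1
  have hcu := cosh_sub_one_le_sq (x := u) (by rwa [abs_of_pos hu])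
  have hcv := cosh_sub_one_le_sq (x := v) (by rwa [abs_of_pos hv])
  rw [log_div hv.ne' hu.ne']
  linarith

theorem entropyPotential_eq {x : ℝ} (hx : 0 < x) :
    entropyPotential x = log (1 - (exp (2 * x))⁻¹) - log 2 - 2 * x / (exp (2 * x) - 1) := by
  have hexp : exp (2 * x) = exp x ^ 2 := by rw [← exp_nat_mul]; norm_num
  have hw : 1 < exp x ^ 2 := hexp ▸ one_lt_exp_iff.2 (by linarith)
  have hw' : 0 < 1 - (exp (2 * x))⁻¹ := by rw [hexp]; exact sub_pos.2 (inv_lt_one_of_one_lt₀ hw)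
  have hsinh : sinh x = exp x * (1 - (exp (2 * x))⁻¹) / 2 := by
    rw [sinh_eq, exp_neg, hexp]; field_simp
  have hcoth : x * cosh x / sinh x = x + 2 * x / (exp (2 * x) - 1) := by
    have : exp x ^ 2 - 1 ≠ 0 := by linarith
    rw [hsinh, cosh_eq, exp_neg, hexp]
    field_simp
    ring
  rw [entropyPotential, hcoth, hsinh, log_div (by positivity) two_ne_zero,
    log_mul (exp_pos x).ne' hw'.ne', log_exp]
  ring

theorem entropyPotential_le_neg_log_two {x : ℝ} (hx : 0 < x) : entropyPotential x ≤ -log 2 := by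
  have hw : 1 < exp (2 * x) := one_lt_exp_iff.2 (by linarith)
  have hlog : log (1 - (exp (2 * x))⁻¹) ≤ 0 :=
    log_nonpos (sub_nonneg.2 (inv_le_one_of_one_le₀ hw.le)) (by simp [(exp_pos _).le])
  have hfrac : 0 ≤ 2 * x / (exp (2 * x) - 1) := div_nonneg (by linarith) (by linarith)
  rw [entropyPotential_eq hx]
  linarith

theorem neg_log_two_sub_inv_le_entropyPotential {x : ℝ} (hx : 0 < x) :
    -log 2 - x⁻¹ ≤ entropyPotential x := by
  have hw : 1 < exp (2 * x) := one_lt_exp_iff.2 (by linarith)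
  have hw' : 0 < exp (2 * x) - 1 := by linarith
  have hlog : -(1 / (exp (2 * x) - 1)) ≤ log (1 - (exp (2 * x))⁻¹) := by
    refine le_of_eq_of_le ?_ (one_sub_inv_le_log_of_pos (sub_pos.2 (inv_lt_one_of_one_lt₀ hw)))
    field_simp
    ring
  have hfrac : 1 / (exp (2 * x) - 1) + 2 * x / (exp (2 * x) - 1) ≤ x⁻¹ := by
    rw [← add_div, div_le_iff₀ hw', inv_mul_eq_div, le_div_iff₀ hx]
    nlinarith [quadratic_le_exp_of_nonneg (by linarith : 0 ≤ 2 * x)]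
  rw [entropyPotential_eq hx]
  linarith

theorem neg_inv_le_entropyPotential_sub {x y : ℝ} (hx : 0 < x) (hy : 0 < y) :
    -x⁻¹ ≤ entropyPotential x - entropyPotential y := by
  linarith [neg_log_two_sub_inv_le_entropyPotential hx, entropyPotential_le_neg_log_two hy]

theorem one_div_one_add_exp_le_half {x : ℝ} (hx : 0 ≤ x) : 1 / (1 + exp x) ≤ 1 / 2 := by
  gcongr
  linarith [one_le_exp hx]

theorem binEntropy_le_binEntropy_binConv {p q : ℝ} (hp : 0 ≤ p) (hp2 : p ≤ 1 / 2) (hq : 0 ≤ q)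
    (hq2 : q ≤ 1 / 2) : binEntropy p ≤ binEntropy (binConv p q) := by
  have hle : p ≤ binConv p q := by rw [binConv]; nlinarith
  have hhalf : binConv p q ≤ 2⁻¹ := by rw [binConv]; nlinarith
  exact binEntropy_strictMonoOn.monotoneOn ⟨hp, by linarith⟩ ⟨hp.trans hle, hhalf⟩ hle

theorem binEnt_eq_binEntropy_div (p : ℝ) : binEnt p = binEntropy p / log 2 := by
  rw [binEnt, binEntropy, logb, logb, log_inv, log_inv]
  ring

theorem log_one_add_le_log_add_inv {r : ℝ} (hr : 0 < r) : log (1 + r) ≤ log r + r⁻¹ := by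
  have hsplit : 1 + r = r * (1 + r⁻¹) := by field_simp; ring
  rw [hsplit, log_mul hr.ne' (by positivity)]
  linarith [log_le_sub_one_of_pos (by positivity : 0 < 1 + r⁻¹)]

theorem log_one_add_div_sub_le_sum_binEntropy_sub {EX EZ ε : ℝ} (hEX : 0 < EX) (hEZ : 0 < EZ)
    (hε : 0 < ε) (hε1 : ε ≤ 1) (hSNR : 1 / ε ≤ EX / EZ) {a b : ℤ} (ha : (2 : ℝ) ^ a ≤ ε * EZ)
    (hb : EX / ε ≤ 2 ^ b) :
    log (1 + EX / EZ) - 3 * ε ≤ ∑ l ∈ Icc a b,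
      (binEntropy (1 / (1 + exp (2 ^ l / EX))) - binEntropy (1 / (1 + exp (2 ^ l / EZ)))) := by
  have hZX : EZ ≤ ε * EX := by rw [div_le_div_iff₀ hε hEZ, one_mul] at hSNR; linarith
  have hab : a - 1 ≤ b := by
    have hpow : (2 : ℝ) ^ a ≤ 2 ^ b := by
      refine ha.trans (le_trans ?_ hb)
      rw [le_div_iff₀ hε]
      nlinarith [mul_le_mul_of_nonneg_left hε1 hε.le, mul_le_mul_of_nonneg_left hε1 hEX.le]
    have hle : a ≤ b := (zpow_le_zpow_iff_right₀ one_lt_two).1 hpow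
    omega
  rw [sum_sub_distrib, sum_binEntropy_one_div_one_add_exp_two_zpow_div hEX hab,
    sum_binEntropy_one_div_one_add_exp_two_zpow_div hEZ hab]
  set c := (2 : ℝ) ^ (a - 1) with hc
  have hc0 : 0 < c := by positivity
  have hcZ : c ≤ ε * EZ / 2 := by rw [hc, zpow_sub_one₀ two_ne_zero]; linarith
  have hu : c / EX ≤ ε / 2 := by rw [div_le_iff₀ hEX]; nlinarith
  have hv : c / EZ ≤ ε / 2 := by rw [div_le_iff₀ hEZ]; linarith
  have hu0 : 0 < c / EX := by positivity
  have hv0 : 0 < c / EZ := by positivity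
  have head : log (EX / EZ) - ε / 2 ≤
      entropyPotential (c / EZ) - entropyPotential (c / EX) := by
    have h := log_div_sub_le_entropyPotential_sub hu0 hv0 (by linarith) (by linarith)
    rw [div_div_div_cancel_left' _ _ hc0.ne'] at h
    nlinarith [mul_le_mul hu hu hu0.le (by positivity), mul_le_mul hv hv hv0.le (by positivity),
      mul_le_mul_of_nonneg_left hε1 hε.le]
  have tail : -ε ≤ entropyPotential (2 ^ b / EX) - entropyPotential (2 ^ b / EZ) := by
    refine le_trans (neg_le_neg ?_)
      (neg_inv_le_entropyPotential_sub (by positivity) (by positivity))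
    rw [inv_div, div_le_iff₀ (by positivity)]
    rwa [div_le_iff₀ hε, mul_comm] at hb
  have hinv : (EX / EZ)⁻¹ ≤ ε := by rw [inv_div, div_le_iff₀ hEX]; linarith
  linarith [log_one_add_le_log_add_inv (by positivity : 0 < EX / EZ)]

/-- Per-fading-state inequality in the paper's Theorem 3: with
`p_l = 1/(1 + exp (2^l / E_X))` and `p̃_l = 1/(1 + exp (2^l / E_Z))`, if `0 < ε < 1`,
`E_X / E_Z ≥ 1/ε`, `L₁ ≥ -log₂ ε - log₂ E_Z` and `L₂ ≥ -log₂ ε + log₂ E_X`, then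
`∑_{l = -L₁}^{L₂} [H(p_l ⊗ p̃_l) - H(p̃_l)] ≥ log₂ (1 + E_X / E_Z) - 5 log₂(e) ε`. -/
theorem expansion_rate_bound_single_state (EX EZ ε : ℝ) (hEX : 0 < EX) (hEZ : 0 < EZ)
    (hε : 0 < ε) (hε1 : ε < 1) (hSNR : 1 / ε ≤ EX / EZ) (L1 L2 : ℤ)
    (hL1 : -Real.logb 2 ε - Real.logb 2 EZ ≤ (L1 : ℝ))
    (hL2 : -Real.logb 2 ε + Real.logb 2 EX ≤ (L2 : ℝ)) :
    Real.logb 2 (1 + EX / EZ) - 5 * Real.logb 2 (Real.exp 1) * ε ≤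
      ∑ l ∈ Finset.Icc (-L1) L2,
        (binEnt (binConv (1 / (1 + Real.exp (2 ^ l / EX)))
            (1 / (1 + Real.exp (2 ^ l / EZ)))) -
          binEnt (1 / (1 + Real.exp (2 ^ l / EZ)))) := by
  have ha : (2 : ℝ) ^ (-L1) ≤ ε * EZ := by
    rw [← rpow_intCast, ← le_logb_iff_rpow_le one_lt_two (by positivity),
      logb_mul hε.ne' hEZ.ne']
    push_cast
    linarith
  have hb : EX / ε ≤ 2 ^ L2 := by
    rw [← rpow_intCast, ← logb_le_iff_le_rpow one_lt_two (by positivity),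
      logb_div hEX.ne' hε.ne']
    linarith
  have hnats := log_one_add_div_sub_le_sum_binEntropy_sub hEX hEZ hε hε1.le hSNR ha hb
  calc logb 2 (1 + EX / EZ) - 5 * logb 2 (exp 1) * ε
      = (log (1 + EX / EZ) - 5 * ε) / log 2 := by rw [logb, logb, log_exp]; ring
    _ ≤ (log (1 + EX / EZ) - 3 * ε) / log 2 := by gcongr; linarith
    _ ≤ ∑ l ∈ Icc (-L1) L2, (binEntropy (1 / (1 + exp (2 ^ l / EX))) -
          binEntropy (1 / (1 + exp (2 ^ l / EZ)))) / log 2 := by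
        rw [← sum_div]
        gcongr
    _ ≤ _ := by
        gcongr with l
        rw [binEnt_eq_binEntropy_div, binEnt_eq_binEntropy_div, ← sub_div]
        gcongr
        exact binEntropy_le_binEntropy_binConv (by positivity)
          (one_div_one_add_exp_le_half (by positivity)) (by positivity)
          (one_div_one_add_exp_le_half (by positivity))
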